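/- arXiv:1901.00131 — 4 statements merged into one kernel-verified Lean document; each statement's English description precedes it below -/
import Mathlib

section
/- Let (X,μ) be a probability space, T: X → X an invertible ergodic measure-preserving transformation that is mixing, and F₀ a sub-σ-algebra with T⁻¹F₀ ⊆ F₀. Let φ = (φ¹,…,φ^k) ∈ L²(X,ℝ^k) with ∫_X φ dμ = 0, and suppose that for each component, Σ_{n≥1} ‖E[φ∘T^{-n} | F₀]‖_{L²} < ∞ and Σ_{n≥0} ‖E[φ∘T^n | F₀] − φ∘T^n‖_{L²} < ∞. Then for all 1 ≤ β, γ ≤ k the series Σ^{βγ} = Σ_{n=−∞}^{∞} ∫_X φ^β · (φ^γ∘T^n) dμ and E^{βγ} = Σ_{n=1}^{∞} ∫_X φ^β · (φ^γ∘T^n) dμ converge. -/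
open MeasureTheory Filter
open scoped ENNReal Topology

/-- The `n`-th iterate of an invertible map `T`, for `n : ℤ` (negative powers use `T⁻¹`). -/
def zIter {X : Type*} [MeasurableSpace X] (T : X ≃ᵐ X) : ℤ → X → X
  | Int.ofNat n => (⇑T)^[n]
  | Int.negSucc n => (⇑T.symm)^[n + 1]

/-!
For `n = j + l + 1`, invariance of `μ` turns `∫ φ^β · φ^γ ∘ T^n` into the correlation of
`φ^β ∘ T^{-(j+1)}` and `φ^γ ∘ T^l`. Splitting the second factor as its conditional expectation
on `F₀` plus an error, and using that conditional expectation is self-adjoint, this correlation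
is at most `‖E[φ^β ∘ T^{-(j+1)} | F₀]‖₂ ‖φ^γ‖₂ + ‖φ^β‖₂ ‖E[φ^γ ∘ T^l | F₀] - φ^γ ∘ T^l‖₂`.
Taking `j` and `l` both close to `n / 2`, the two summability hypotheses make these bounds
summable in `n`. Negative `n` reduce to positive ones with `β` and `γ` exchanged.
-/

theorem summable_of_enorm_add_le {E : Type*} [NormedAddCommGroup E] [CompleteSpace E]
    {c : ℕ → E} {a b : ℕ → ℝ≥0∞} (ha : ∑' n, a n ≠ ∞) (hb : ∑' n, b n ≠ ∞)
    (h : ∀ j l, ‖c (j + l)‖ₑ ≤ a j + b l) : Summable c := by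
  refine Summable.of_enorm ?_
  have hb_succ : ∑' n, b (n + 1) ≠ ∞ :=
    ne_top_of_le_ne_top hb (ENNReal.tsum_comp_le_tsum_of_injective (add_left_injective 1) b)
  rw [← tsum_even_add_odd ENNReal.summable ENNReal.summable, ENNReal.add_ne_top]
  constructor
  · refine ne_top_of_le_ne_top (ENNReal.add_ne_top.2 ⟨ha, hb⟩) ?_
    rw [← ENNReal.tsum_add]
    exact ENNReal.tsum_le_tsum fun k => by simpa [two_mul] using h k k
  · refine ne_top_of_le_ne_top (ENNReal.add_ne_top.2 ⟨ha, hb_succ⟩) ?_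
    rw [← ENNReal.tsum_add]
    exact ENNReal.tsum_le_tsum fun k => by simpa [two_mul, add_assoc] using h k (k + 1)

theorem MeasurableEquiv.measurableEmbedding_iterate {X : Type*} [MeasurableSpace X]
    (T : X ≃ᵐ X) : ∀ n, MeasurableEmbedding (⇑T)^[n]
  | 0 => MeasurableEmbedding.id
  | n + 1 => (T.measurableEmbedding_iterate n).comp T.measurableEmbedding

theorem zIter_neg_natCast_add_one {X : Type*} [MeasurableSpace X] (T : X ≃ᵐ X) (n : ℕ) :
    zIter T (-(n + 1)) = (⇑T.symm)^[n + 1] := by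
  rw [← Int.negSucc_eq]
  rfl

namespace MeasureTheory

variable {X : Type*} {m mX : MeasurableSpace X} {μ : Measure X} {f g : X → ℝ}

theorem enorm_integral_mul_le_eLpNorm_mul_eLpNorm (hf : AEStronglyMeasurable f μ)
    (hg : AEStronglyMeasurable g μ) :
    ‖∫ x, f x * g x ∂μ‖ₑ ≤ eLpNorm f 2 μ * eLpNorm g 2 μ :=
  calc ‖∫ x, f x * g x ∂μ‖ₑ ≤ eLpNorm (f • g) 1 μ := by
        rw [eLpNorm_one_eq_lintegral_enorm]
        exact enorm_integral_le_lintegral_enorm _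
    _ ≤ eLpNorm f 2 μ * eLpNorm g 2 μ := eLpNorm_smul_le_mul_eLpNorm hg hf

section Conditioning

variable [IsFiniteMeasure μ]

theorem integral_mul_condExp_eq_integral_condExp_mul_condExp (hm : m ≤ mX)
    (hf : MemLp f 2 μ) (hg : MemLp g 2 μ) :
    ∫ x, f x * μ[g|m] x ∂μ = ∫ x, μ[f|m] x * μ[g|m] x ∂μ :=
  calc ∫ x, f x * μ[g|m] x ∂μ = ∫ x, (μ[g|m] * f) x ∂μ := by simp only [Pi.mul_apply, mul_comm]
    _ = ∫ x, (μ[μ[g|m] * f|m]) x ∂μ := (integral_condExp hm).symm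
    _ = ∫ x, (μ[g|m] * μ[f|m]) x ∂μ := integral_congr_ae <|
      condExp_mul_of_stronglyMeasurable_left stronglyMeasurable_condExp
        ((hg.condExp one_le_two).integrable_mul hf) (hf.integrable one_le_two)
    _ = _ := by simp only [Pi.mul_apply, mul_comm]

theorem integral_mul_condExp_comm (hm : m ≤ mX) (hf : MemLp f 2 μ) (hg : MemLp g 2 μ) :
    ∫ x, f x * μ[g|m] x ∂μ = ∫ x, μ[f|m] x * g x ∂μ := by
  have hcomm {u v : X → ℝ} : ∫ x, u x * v x ∂μ = ∫ x, v x * u x ∂μ :=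
    integral_congr_ae (.of_forall fun x => mul_comm _ _)
  rw [integral_mul_condExp_eq_integral_condExp_mul_condExp hm hf hg, hcomm,
    ← integral_mul_condExp_eq_integral_condExp_mul_condExp hm hg hf, hcomm]

theorem enorm_integral_mul_le_condExp (hm : m ≤ mX) (hf : MemLp f 2 μ) (hg : MemLp g 2 μ) :
    ‖∫ x, f x * g x ∂μ‖ₑ ≤
      eLpNorm (μ[f|m]) 2 μ * eLpNorm g 2 μ + eLpNorm f 2 μ * eLpNorm (μ[g|m] - g) 2 μ := by
  have hcg : MemLp (μ[g|m]) 2 μ := hg.condExp one_le_two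
  have hsplit : ∫ x, f x * g x ∂μ =
      ∫ x, μ[f|m] x * g x ∂μ - ∫ x, f x * (μ[g|m] - g) x ∂μ := by
    rw [← integral_mul_condExp_comm hm hf hg, ← integral_sub (f := fun x => f x * μ[g|m] x)
      (g := fun x => f x * (μ[g|m] - g) x) (hf.integrable_mul hcg)
      (hf.integrable_mul (hcg.sub hg))]
    simp only [Pi.sub_apply, mul_sub, sub_sub_cancel]
  rw [hsplit]
  refine enorm_sub_le.trans (add_le_add ?_ ?_)
  · exact enorm_integral_mul_le_eLpNorm_mul_eLpNorm (hf.condExp one_le_two).1 hg.1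
  · exact enorm_integral_mul_le_eLpNorm_mul_eLpNorm hf.1 (hcg.sub hg).1

end Conditioning

section Shift

variable {T : X ≃ᵐ X}

theorem MeasurePreserving.integral_mul_comp_iterate_add (hT : MeasurePreserving T μ μ)
    (f g : X → ℝ) (j l : ℕ) :
    ∫ x, f x * g ((⇑T)^[j + l] x) ∂μ = ∫ x, f ((⇑T.symm)^[j] x) * g ((⇑T)^[l] x) ∂μ := by
  conv_rhs => rw [← (hT.iterate j).integral_comp (T.measurableEmbedding_iterate j)]
  simp only [(Function.LeftInverse.iterate T.symm_apply_apply j) _,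
    ← Function.iterate_add_apply, add_comm l j]

theorem MeasurePreserving.integral_mul_comp_symm_iterate (hT : MeasurePreserving T μ μ)
    (f g : X → ℝ) (n : ℕ) :
    ∫ x, f x * g ((⇑T.symm)^[n] x) ∂μ = ∫ x, g x * f ((⇑T)^[n] x) ∂μ := by
  simpa only [mul_comm, add_zero, Function.iterate_zero_apply]
    using (hT.integral_mul_comp_iterate_add g f n 0).symm

variable [IsFiniteMeasure μ]

theorem enorm_integral_mul_comp_iterate_le (hm : m ≤ mX) (hT : MeasurePreserving T μ μ)
    (hf : MemLp f 2 μ) (hg : MemLp g 2 μ) (j l : ℕ) :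
    ‖∫ x, f x * g ((⇑T)^[j + l + 1] x) ∂μ‖ₑ ≤
      eLpNorm (μ[f ∘ (⇑T.symm)^[j + 1] | m]) 2 μ * eLpNorm g 2 μ +
        eLpNorm f 2 μ * eLpNorm (μ[g ∘ (⇑T)^[l] | m] - g ∘ (⇑T)^[l]) 2 μ := by
  have hS : MeasurePreserving ((⇑T.symm)^[j + 1]) μ μ := (hT.symm T).iterate (j + 1)
  have hTl : MeasurePreserving ((⇑T)^[l]) μ μ := hT.iterate l
  rw [add_right_comm, hT.integral_mul_comp_iterate_add,
    ← eLpNorm_comp_measurePreserving hg.1 hTl, ← eLpNorm_comp_measurePreserving hf.1 hS]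
  exact enorm_integral_mul_le_condExp hm (hf.comp_measurePreserving hS)
    (hg.comp_measurePreserving hTl)

theorem summable_integral_mul_comp_iterate_succ (hm : m ≤ mX) (hT : MeasurePreserving T μ μ)
    (hf : MemLp f 2 μ) (hg : MemLp g 2 μ)
    (hfm : ∑' n, eLpNorm (μ[f ∘ (⇑T.symm)^[n + 1] | m]) 2 μ ≠ ∞)
    (hgm : ∑' n, eLpNorm (μ[g ∘ (⇑T)^[n] | m] - g ∘ (⇑T)^[n]) 2 μ ≠ ∞) :
    Summable fun n => ∫ x, f x * g ((⇑T)^[n + 1] x) ∂μ :=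
  summable_of_enorm_add_le
    (by rw [ENNReal.tsum_mul_right]; exact ENNReal.mul_ne_top hfm hg.eLpNorm_ne_top)
    (by rw [ENNReal.tsum_mul_left]; exact ENNReal.mul_ne_top hf.eLpNorm_ne_top hgm)
    (enorm_integral_mul_comp_iterate_le hm hT hf hg)

end Shift

end MeasureTheory

theorem covariance_series_converge_general
    {X : Type*} (F0 : MeasurableSpace X) [mX : MeasurableSpace X]
    (μ : Measure X) [IsProbabilityMeasure μ]
    (T : X ≃ᵐ X) (hT : MeasurePreserving (⇑T) μ μ)
    (hF0 : F0 ≤ mX)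
    (k : ℕ) (φ : Fin k → X → ℝ)
    (hφ : ∀ β, MemLp (φ β) 2 μ)
    (h1 : ∀ β, ∑' n : ℕ, eLpNorm (μ[(φ β) ∘ (⇑T.symm)^[n + 1] | F0]) 2 μ < ∞)
    (h2 : ∀ β, ∑' n : ℕ, eLpNorm (μ[(φ β) ∘ (⇑T)^[n] | F0] - (φ β) ∘ (⇑T)^[n]) 2 μ < ∞) :
    ∀ β γ : Fin k,
      Summable (fun n : ℤ => ∫ x, φ β x * φ γ (zIter T n x) ∂μ) ∧
      Summable (fun n : ℕ => ∫ x, φ β x * φ γ ((⇑T)^[n + 1] x) ∂μ) := by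
  have hpos (β γ : Fin k) : Summable fun n : ℕ => ∫ x, φ β x * φ γ ((⇑T)^[n + 1] x) ∂μ :=
    summable_integral_mul_comp_iterate_succ hF0 hT (hφ β) (hφ γ) (h1 β).ne (h2 γ).ne
  intro β γ
  refine ⟨.of_nat_of_neg_add_one ?_ ?_, hpos β γ⟩
  · exact (summable_nat_add_iff 1).1 (hpos β γ)
  · simp only [zIter_neg_natCast_add_one, hT.integral_mul_comp_symm_iterate]
    exact hpos γ β

/-- Proposition 2.5(i): for a mixing `T` and an `ℝ^k`-valued mean-zero
`φ ∈ L²` satisfying the summability conditions (2.2) componentwise, the series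
`Σ^{βγ} = Σ_{n∈ℤ} ∫ φ^β (φ^γ∘T^n) dμ` and `E^{βγ} = Σ_{n≥1} ∫ φ^β (φ^γ∘T^n) dμ` converge. -/
theorem covariance_series_converge
    {X : Type*} (F0 : MeasurableSpace X) [mX : MeasurableSpace X]
    (μ : Measure X) [IsProbabilityMeasure μ]
    (T : X ≃ᵐ X) (hT : MeasurePreserving (⇑T) μ μ) (hTerg : Ergodic (⇑T) μ)
    (hmix : ∀ A B : Set X, MeasurableSet A → MeasurableSet B →
      Tendsto (fun n : ℕ => (μ (A ∩ (⇑T)^[n] ⁻¹' B)).toReal) atTop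
        (𝓝 ((μ A).toReal * (μ B).toReal)))
    (hF0 : F0 ≤ mX)
    (hF0T : MeasurableSpace.comap (⇑T) F0 ≤ F0)
    (k : ℕ) (φ : Fin k → X → ℝ)
    (hφ : ∀ β, MemLp (φ β) 2 μ) (hmean : ∀ β, ∫ x, φ β x ∂μ = 0)
    (h1 : ∀ β, ∑' n : ℕ, eLpNorm (μ[(φ β) ∘ (⇑T.symm)^[n + 1] | F0]) 2 μ < ∞)
    (h2 : ∀ β, ∑' n : ℕ, eLpNorm (μ[(φ β) ∘ (⇑T)^[n] | F0] - (φ β) ∘ (⇑T)^[n]) 2 μ < ∞) :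
    ∀ β γ : Fin k,
      Summable (fun n : ℤ => ∫ x, φ β x * φ γ (zIter T n x) ∂μ) ∧
      Summable (fun n : ℕ => ∫ x, φ β x * φ γ ((⇑T)^[n + 1] x) ∂μ) :=
  covariance_series_converge_general F0 (mX := mX) μ T hT hF0 k φ hφ h1 h2
end

section
/- Let (X,μ) be a probability space, T: X → X an invertible measure-preserving transformation, and F₀ a sub-σ-algebra with T⁻¹F₀ ⊆ F₀. Let p ≥ 1, β > 1, C > 0, and let φ ∈ L^∞(X,μ) with ∫_X φ dμ = 0 satisfy: |∫_X φ · (ψ∘T^n) dμ| ≤ C ‖ψ‖_∞ n^{-β} for all n ≥ 1 and all ψ ∈ L^∞(X,μ) that are F₀-measurable. Then for all n ≥ 1, ‖E[φ∘T^{-n} | F₀]‖_{L^p}^p ≤ C ‖φ‖_∞^{p−1} n^{-β}. -/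
open MeasureTheory Filter
open scoped ENNReal Topology

/-! With `f = E[φ ∘ T⁻ⁿ | F₀]`, the function `ψ = sgn f · |f|^(p-1)` is `F₀`-measurable, bounded by
`‖φ‖_∞^(p-1)` because conditional expectation does not increase the sup norm, and satisfies
`ψ f = |f|^p`. Pulling `ψ` out of the conditional expectation and changing variables by `Tⁿ` gives
`∫ |f|^p = ∫ ψ · φ ∘ T⁻ⁿ = ∫ φ · ψ ∘ Tⁿ`, which the correlation bound estimates. -/

theorem Real.measurable_sign : Measurable Real.sign :=
  Measurable.ite measurableSet_Iio measurable_const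
    (Measurable.ite measurableSet_Ioi measurable_const measurable_const)

theorem Real.sign_mul_self (y : ℝ) : Real.sign y * y = |y| := by
  rcases lt_trichotomy y 0 with h | rfl | h
  · rw [Real.sign_of_neg h, abs_of_neg h, neg_one_mul]
  · simp
  · rw [Real.sign_of_pos h, abs_of_pos h, one_mul]

theorem Real.abs_sign_le_one (y : ℝ) : |Real.sign y| ≤ 1 := by
  rcases Real.sign_apply_eq y with h | h | h <;> simp [h]

noncomputable def signedRpow (q y : ℝ) : ℝ := Real.sign y * |y| ^ q

theorem measurable_signedRpow (q : ℝ) : Measurable (signedRpow q) :=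
  Real.measurable_sign.mul (by fun_prop)

theorem abs_signedRpow_le (q y : ℝ) : |signedRpow q y| ≤ |y| ^ q := by
  rw [signedRpow, abs_mul, abs_of_nonneg (Real.rpow_nonneg (abs_nonneg y) q)]
  exact mul_le_of_le_one_left (Real.rpow_nonneg (abs_nonneg y) q) (Real.abs_sign_le_one y)

theorem signedRpow_sub_one_mul_self {p : ℝ} (hp : p ≠ 0) (y : ℝ) :
    signedRpow (p - 1) y * y = |y| ^ p := by
  rcases eq_or_ne y 0 with rfl | hy
  · simp [signedRpow, Real.zero_rpow hp]
  · rw [signedRpow, mul_right_comm, Real.sign_mul_self, mul_comm,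
      ← Real.rpow_add_one (abs_ne_zero.mpr hy), sub_add_cancel]

namespace MeasureTheory

variable {Ω : Type*} {m m0 : MeasurableSpace Ω} {μ : Measure Ω}

theorem integral_mul_condExp_of_bound (hm : m ≤ m0) [IsFiniteMeasure μ] {ψ g : Ω → ℝ}
    (hψ : StronglyMeasurable[m] ψ) (hg : Integrable g μ) (c : ℝ) (hψc : ∀ᵐ x ∂μ, ‖ψ x‖ ≤ c) :
    ∫ x, ψ x * μ[g | m] x ∂μ = ∫ x, ψ x * g x ∂μ := by
  rw [← integral_condExp hm (f := fun x ↦ ψ x * g x)]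
  exact integral_congr_ae (condExp_stronglyMeasurable_mul_of_bound hm hψ hg c hψc).symm

theorem MemLp.ae_abs_signedRpow_condExp_le {q : ℝ} (hq : 0 ≤ q) {g : Ω → ℝ} (hg : MemLp g ∞ μ) :
    ∀ᵐ x ∂μ, |signedRpow q (μ[g | m] x)| ≤ lpNorm g ∞ μ ^ q := by
  filter_upwards [ae_bdd_norm_condExp_of_ae_bdd_norm (ae_le_lpNorm_exponent_top hg)] with x hx
  exact (abs_signedRpow_le q _).trans (Real.rpow_le_rpow (abs_nonneg _) hx hq)

theorem MemLp.integral_abs_condExp_rpow_eq (hm : m ≤ m0) [IsFiniteMeasure μ] {p : ℝ} (hp : 1 ≤ p)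
    {g : Ω → ℝ} (hg : MemLp g ∞ μ) :
    ∫ x, |μ[g | m] x| ^ p ∂μ = ∫ x, signedRpow (p - 1) (μ[g | m] x) * g x ∂μ := by
  have hψ : StronglyMeasurable[m] fun x ↦ signedRpow (p - 1) (μ[g | m] x) :=
    ((measurable_signedRpow _).comp stronglyMeasurable_condExp.measurable).stronglyMeasurable
  rw [← integral_mul_condExp_of_bound hm hψ (hg.integrable le_top) _
    (hg.ae_abs_signedRpow_condExp_le (sub_nonneg.mpr hp))]
  simp_rw [signedRpow_sub_one_mul_self (by linarith : p ≠ 0)]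

theorem MemLp.eLpNorm_ofReal_rpow {p : ℝ} (hp : 0 < p) {f : Ω → ℝ}
    (hf : MemLp f (ENNReal.ofReal p) μ) :
    eLpNorm f (ENNReal.ofReal p) μ ^ p = ENNReal.ofReal (∫ x, |f x| ^ p ∂μ) := by
  rw [hf.eLpNorm_eq_integral_rpow_norm (by simpa using hp) ENNReal.ofReal_ne_top,
    ENNReal.toReal_ofReal hp.le, ENNReal.ofReal_rpow_of_nonneg (by positivity) hp.le,
    Real.rpow_inv_rpow (integral_nonneg fun x ↦ by positivity) hp.ne']
  simp only [Real.norm_eq_abs]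

theorem MeasurePreserving.integral_comp_iterate {α E : Type*} [MeasurableSpace α]
    [NormedAddCommGroup E] [NormedSpace ℝ E] {μ : Measure α} {e : α ≃ᵐ α}
    (he : MeasurePreserving e μ μ) (g : α → E) (n : ℕ) :
    ∫ x, g (e^[n] x) ∂μ = ∫ x, g x ∂μ := by
  induction n generalizing g with
  | zero => rfl
  | succ n ih =>
    simp_rw [Function.iterate_succ_apply]
    exact (he.integral_comp' (fun y ↦ g (e^[n] y))).trans (ih g)

theorem MeasurePreserving.integral_comp_symm_iterate_mul {α : Type*} [MeasurableSpace α]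
    {μ : Measure α} {T : α ≃ᵐ α} (hT : MeasurePreserving T μ μ) (φ ψ : α → ℝ) (n : ℕ) :
    ∫ x, φ (T.symm^[n] x) * ψ x ∂μ = ∫ x, φ x * ψ (T^[n] x) ∂μ := by
  rw [← (hT.symm T).integral_comp_iterate (fun x ↦ φ x * ψ (T^[n] x)) n]
  simp_rw [(Function.LeftInverse.iterate T.apply_symm_apply n) _]

end MeasureTheory

theorem condexp_backward_bound_general
    {X : Type*} (F0 : MeasurableSpace X) [mX : MeasurableSpace X]
    (μ : Measure X) [IsProbabilityMeasure μ]
    (T : X ≃ᵐ X) (hT : MeasurePreserving (⇑T) μ μ)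
    (hF0 : F0 ≤ mX)
    (p β C : ℝ) (hp : 1 ≤ p) (hC : 0 < C)
    (φ : X → ℝ) (hφ : MemLp φ ∞ μ)
    (ha : ∀ n : ℕ, 1 ≤ n → ∀ ψ : X → ℝ, Measurable[F0] ψ → MemLp ψ ∞ μ →
      |∫ x, φ x * ψ ((⇑T)^[n] x) ∂μ| ≤ C * (eLpNorm ψ ∞ μ).toReal * (n : ℝ) ^ (-β)) :
    ∀ n : ℕ, 1 ≤ n →
      eLpNorm (μ[φ ∘ (⇑T.symm)^[n] | F0]) (ENNReal.ofReal p) μ ^ p ≤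
        ENNReal.ofReal (C * (eLpNorm φ ∞ μ).toReal ^ (p - 1) * (n : ℝ) ^ (-β)) := by
  intro n hn
  have hTn : MeasurePreserving (⇑T.symm)^[n] μ μ := (hT.symm T).iterate n
  have hg : MemLp (φ ∘ (⇑T.symm)^[n]) ∞ μ := hφ.comp_measurePreserving hTn
  have hgφ : lpNorm (φ ∘ (⇑T.symm)^[n]) ∞ μ = (eLpNorm φ ∞ μ).toReal := by
    rw [← toReal_eLpNorm hg.1, eLpNorm_comp_measurePreserving hφ.1 hTn]
  set ψ : X → ℝ := fun x ↦ signedRpow (p - 1) (μ[φ ∘ (⇑T.symm)^[n] | F0] x)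
  have hψ_meas : Measurable[F0] ψ :=
    (measurable_signedRpow _).comp stronglyMeasurable_condExp.measurable
  have hψ_bound : ∀ᵐ x ∂μ, ‖ψ x‖ ≤ (eLpNorm φ ∞ μ).toReal ^ (p - 1) :=
    hgφ ▸ hg.ae_abs_signedRpow_condExp_le (sub_nonneg.mpr hp)
  have hψ : MemLp ψ ∞ μ :=
    memLp_top_of_bound ((hψ_meas.mono hF0 le_rfl).aestronglyMeasurable) _ hψ_bound
  have hψ_norm : (eLpNorm ψ ∞ μ).toReal ≤ (eLpNorm φ ∞ μ).toReal ^ (p - 1) :=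
    ENNReal.toReal_le_of_le_ofReal (by positivity) (eLpNormEssSup_le_of_ae_bound hψ_bound)
  rw [((hg.mono_exponent le_top).condExp (ENNReal.one_le_ofReal.mpr hp)).eLpNorm_ofReal_rpow
    (by linarith)]
  refine ENNReal.ofReal_le_ofReal ?_
  calc ∫ x, |μ[φ ∘ (⇑T.symm)^[n] | F0] x| ^ p ∂μ
      = ∫ x, φ x * ψ ((⇑T)^[n] x) ∂μ := by
        rw [hg.integral_abs_condExp_rpow_eq hF0 hp, ← hT.integral_comp_symm_iterate_mul]
        exact integral_congr_ae (.of_forall fun x ↦ mul_comm _ _)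
    _ ≤ C * (eLpNorm ψ ∞ μ).toReal * (n : ℝ) ^ (-β) :=
        (le_abs_self _).trans (ha n hn ψ hψ_meas hψ)
    _ ≤ C * (eLpNorm φ ∞ μ).toReal ^ (p - 1) * (n : ℝ) ^ (-β) := by gcongr

/-- first half of the proof of Theorem 3.1: the correlation bound (a)
against `F₀`-measurable `L^∞` test functions yields
`‖E[φ∘T^{-n} | F₀]‖_{L^p}^p ≤ C ‖φ‖_∞^{p-1} n^{-β}` for all `n ≥ 1`. -/
theorem condexp_backward_bound
    {X : Type*} (F0 : MeasurableSpace X) [mX : MeasurableSpace X]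
    (μ : Measure X) [IsProbabilityMeasure μ]
    (T : X ≃ᵐ X) (hT : MeasurePreserving (⇑T) μ μ)
    (hF0 : F0 ≤ mX)
    (hF0T : MeasurableSpace.comap (⇑T) F0 ≤ F0)
    (p β C : ℝ) (hp : 1 ≤ p) (hβ : 1 < β) (hC : 0 < C)
    (φ : X → ℝ) (hφ : MemLp φ ∞ μ) (hmean : ∫ x, φ x ∂μ = 0)
    (ha : ∀ n : ℕ, 1 ≤ n → ∀ ψ : X → ℝ, Measurable[F0] ψ → MemLp ψ ∞ μ →
      |∫ x, φ x * ψ ((⇑T)^[n] x) ∂μ| ≤ C * (eLpNorm ψ ∞ μ).toReal * (n : ℝ) ^ (-β)) :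
    ∀ n : ℕ, 1 ≤ n →
      eLpNorm (μ[φ ∘ (⇑T.symm)^[n] | F0]) (ENNReal.ofReal p) μ ^ p ≤
        ENNReal.ofReal (C * (eLpNorm φ ∞ μ).toReal ^ (p - 1) * (n : ℝ) ^ (-β)) :=
  condexp_backward_bound_general F0 (mX := mX) μ T hT hF0 p β C hp hC φ hφ ha
end

section
/- Let (X,μ) be a probability space and T: X → X an invertible ergodic measure-preserving transformation, with X covered by a collection W^s of pairwise disjoint measurable local stable leaves satisfying T(W^s(x)) ⊆ W^s(Tx). Let Y ⊆ X be a positive measure subset that is a union of leaves of W^s, with first return time R(y) = inf{n ≥ 1 : T^n y ∈ Y} and first return map F(y) = T^{R(y)}y, and for x ∈ X and n ≥ 1 set h_n(x) = #{0 ≤ j ≤ n : T^j x ∈ Y}. Let φ: X → ℝ be measurable, β > 1, and suppose μ(y ∈ Y : R(y) > n) = O(n^{−(β+1)}) and there exist constants C ≥ 1 and γ ∈ (0,1) such that diam(φ(T^n W)) ≤ C γ^{h_n(x)} for all W ∈ W^s, x ∈ W, and n ≥ 1. Then ∫_X diam(φ(T^n W^s(x))) dμ(x) = O(n^{−β}) as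 n → ∞. -/
/-!
Let `D_L` be the set of points that do not visit `Y` at the times `0, …, L - 1`. Since `T`
preserves `μ`, `μ D_L = μ D_{L+1} + μ (Y ∩ T⁻¹ D_L)`, and the last set consists of points of `Y`
whose return time exceeds `L`, up to the set of points that never visit `Y`, which is null by
ergodicity. Telescoping gives `μ D_L ≤ ∑_{m ≥ L} μ (R > m) = O(L^{-β})`.

If `h_n x ≤ k`, then one of `k + 1` consecutive blocks of length `ℓ ≈ n / (k + 1)` in `[0, n]`
contains no visit, so `μ (h_n ≤ k) ≤ (k + 1) μ D_ℓ = O((k + 1)^{β+1} n^{-β})`. As the diameters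
are bounded by `C γ^{h_n}`, summing these bounds against `γ^k` gives the claim.
-/

open MeasureTheory Filter Finset
open scoped ENNReal Topology

theorem sum_range_add_succ_rpow_neg_le {β a : ℝ} (hβ : 0 < β) (ha : 0 < a) (N : ℕ) :
    ∑ i ∈ range N, (a + (i + 1 : ℕ)) ^ (-(β + 1)) ≤ a ^ (-β) / β := by
  have hanti : AntitoneOn (fun x : ℝ ↦ x ^ (-(β + 1))) (Set.Icc a (a + N)) :=
    (Real.antitoneOn_rpow_Ioi_of_exponent_nonpos (by linarith)).mono
      fun x hx ↦ ha.trans_le hx.1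
  have h0 : (0 : ℝ) ∉ Set.uIcc a (a + N) := by
    rw [Set.uIcc_of_le (by linarith [N.cast_nonneg (α := ℝ)])]
    exact fun h ↦ ha.not_ge h.1
  calc ∑ i ∈ range N, (a + (i + 1 : ℕ)) ^ (-(β + 1))
      ≤ ∫ x in a..a + N, x ^ (-(β + 1)) := hanti.sum_le_integral
    _ = (a ^ (-β) - (a + N) ^ (-β)) / β := by
      rw [integral_rpow (Or.inr ⟨by linarith, h0⟩), show -(β + 1) + 1 = -β by ring, div_neg,
        ← neg_div, neg_sub]
    _ ≤ a ^ (-β) / β := by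
      gcongr
      exact sub_le_self _ (Real.rpow_nonneg (by positivity) _)

theorem tsum_ofReal_rpow_neg_le {β : ℝ} (hβ : 0 < β) {L : ℕ} (hL : 1 ≤ L) :
    ∑' i, ENNReal.ofReal (((L + i : ℕ) : ℝ) ^ (-(β + 1))) ≤
      ENNReal.ofReal ((1 + β⁻¹) * (L : ℝ) ^ (-β)) := by
  have hL' : (1 : ℝ) ≤ L := by exact_mod_cast hL
  refine ENNReal.tsum_le_of_sum_range_le fun N ↦ ?_
  rw [← ENNReal.ofReal_sum_of_nonneg fun i _ ↦ Real.rpow_nonneg (by positivity) _]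
  refine ENNReal.ofReal_le_ofReal ?_
  have hfirst : (L : ℝ) ^ (-(β + 1)) ≤ (L : ℝ) ^ (-β) :=
    Real.rpow_le_rpow_of_exponent_le hL' (by linarith)
  cases N with
  | zero => simp only [range_zero, sum_empty]; positivity
  | succ N =>
    rw [sum_range_succ']
    simp only [Nat.cast_add L, add_zero]
    calc ∑ i ∈ range N, ((L : ℝ) + (i + 1 : ℕ)) ^ (-(β + 1)) + (L : ℝ) ^ (-(β + 1))
        ≤ (L : ℝ) ^ (-β) / β + (L : ℝ) ^ (-β) :=
           add_le_add (sum_range_add_succ_rpow_neg_le hβ (by positivity) N) hfirst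
      _ = (1 + β⁻¹) * (L : ℝ) ^ (-β) := by ring

theorem summable_add_one_rpow_mul_pow {γ : ℝ} (hγ0 : 0 < γ) (hγ1 : γ < 1) (p : ℝ) :
    Summable fun k : ℕ ↦ ((k : ℝ) + 1) ^ p * γ ^ k := by
  set m := ⌈p⌉₊
  have hshift : Summable fun k : ℕ ↦ ((k + 1 : ℕ) : ℝ) ^ m * γ ^ (k + 1) :=
    (summable_nat_add_iff (f := fun k : ℕ ↦ (k : ℝ) ^ m * γ ^ k) 1).mpr <|
      summable_pow_mul_geometric_of_norm_lt_one m <| by rwa [Real.norm_of_nonneg hγ0.le]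
  refine Summable.of_nonneg_of_le (fun k ↦ ?_) (fun k ↦ ?_) (hshift.mul_left γ⁻¹)
  · have : (0 : ℝ) ≤ (k : ℝ) + 1 := by positivity
    positivity
  have hk : (1 : ℝ) ≤ (k : ℝ) + 1 := by linarith [k.cast_nonneg (α := ℝ)]
  calc ((k : ℝ) + 1) ^ p * γ ^ k ≤ ((k : ℝ) + 1) ^ (m : ℝ) * γ ^ k := by
        gcongr
        exact Nat.le_ceil p
    _ = γ⁻¹ * (((k + 1 : ℕ) : ℝ) ^ m * γ ^ (k + 1)) := by
        rw [Real.rpow_natCast, pow_succ]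
        push_cast
        field_simp

theorem rpow_neg_le_mul_rpow_neg {β a b m : ℝ} (hβ : 0 ≤ β) (ha : 0 < a) (hm : 0 < m)
    (hab : a ≤ m * b) : b ^ (-β) ≤ m ^ β * a ^ (-β) := by
  calc b ^ (-β) ≤ (a / m) ^ (-β) :=
        Real.rpow_le_rpow_of_nonpos (by positivity) (by rwa [div_le_iff₀' hm]) (by linarith)
    _ = m ^ β * a ^ (-β) := by
        rw [Real.div_rpow ha.le hm.le, Real.rpow_neg hm.le, div_inv_eq_mul, mul_comm]

theorem ENNReal.le_tsum_of_le_add_of_tendsto_zero {a b : ℕ → ℝ≥0∞}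
    (hab : ∀ n, a n ≤ a (n + 1) + b n) (ha : Tendsto a atTop (𝓝 0)) : a 0 ≤ ∑' n, b n := by
  have hpartial : ∀ N, a 0 ≤ a N + ∑ i ∈ range N, b i := by
    intro N
    induction N with
    | zero => simp
    | succ N ih =>
      calc a 0 ≤ a N + ∑ i ∈ range N, b i := ih
        _ ≤ a (N + 1) + b N + ∑ i ∈ range N, b i := by gcongr; exact hab N
        _ = a (N + 1) + ∑ i ∈ range (N + 1), b i := by rw [sum_range_succ]; ring
  simpa using ge_of_tendsto' (ha.add (ENNReal.tendsto_nat_tsum b)) hpartial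

theorem Finset.exists_le_forall_mul_add_notMem (S : Finset ℕ) {k : ℕ} (hS : #S ≤ k) (ℓ : ℕ) :
    ∃ i ≤ k, ∀ j < ℓ, ℓ * i + j ∉ S := by
  obtain ⟨i, hi, hiS⟩ := exists_mem_notMem_of_card_lt_card (s := S.image (· / ℓ))
    (t := range (k + 1)) <| by
      rw [card_range]
      exact (card_image_le.trans hS).trans_lt k.lt_succ_self
  refine ⟨i, Nat.lt_succ_iff.1 (mem_range.1 hi), fun j hj hmem ↦ hiS (mem_image.2 ⟨_, hmem, ?_⟩)⟩
  rw [Nat.mul_add_div (by omega), Nat.div_eq_of_lt hj, add_zero]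

theorem lintegral_ofReal_pow_le {X : Type*} [MeasurableSpace X] {μ : Measure X} {u : X → ℕ}
    (hu : Measurable u) {γ p A : ℝ} (hγ0 : 0 < γ) (hγ1 : γ < 1) (hA : 0 ≤ A)
    (hdist : ∀ k : ℕ, μ {x | u x ≤ k} ≤ ENNReal.ofReal (A * ((k : ℝ) + 1) ^ p)) :
    ∫⁻ x, ENNReal.ofReal (γ ^ u x) ∂μ ≤
      ENNReal.ofReal (A * ∑' k : ℕ, ((k : ℝ) + 1) ^ p * γ ^ k) := by
  have hsum := summable_add_one_rpow_mul_pow hγ0 hγ1 p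
  calc ∫⁻ x, ENNReal.ofReal (γ ^ u x) ∂μ
      = ∑' k : ℕ, ENNReal.ofReal (γ ^ k) * μ (u ⁻¹' {k}) := by
        rw [← lintegral_map (f := fun k : ℕ ↦ ENNReal.ofReal (γ ^ k))
          (measurable_of_countable _) hu, lintegral_countable']
        simp_rw [Measure.map_apply hu (measurableSet_singleton _)]
    _ ≤ ∑' k : ℕ, ENNReal.ofReal (A * (((k : ℝ) + 1) ^ p * γ ^ k)) := by
        gcongr with k
        rw [show A * (((k : ℝ) + 1) ^ p * γ ^ k) = γ ^ k * (A * ((k : ℝ) + 1) ^ p) by ring,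
          ENNReal.ofReal_mul (by positivity)]
        gcongr
        exact (measure_mono fun x (hx : u x = k) ↦ show u x ≤ k from hx.le).trans (hdist k)
    _ = ENNReal.ofReal (A * ∑' k : ℕ, ((k : ℝ) + 1) ^ p * γ ^ k) := by
        rw [← ENNReal.ofReal_tsum_of_nonneg (fun k ↦ by positivity) (hsum.mul_left A),
          tsum_mul_left]

section Visits

variable {X : Type*} {f : X → X} {Y : Set X}

def noVisit (f : X → X) (Y : Set X) (L : ℕ) : Set X := {x | ∀ j < L, f^[j] x ∉ Y}

noncomputable def visitCount (f : X → X) (Y : Set X) (n : ℕ) (x : X) : ℕ :=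
  {j | j ≤ n ∧ f^[j] x ∈ Y}.ncard

theorem noVisit_antitone : Antitone (noVisit f Y) :=
  fun _ _ hLM _ hx j hj ↦ hx j (hj.trans_le hLM)

theorem noVisit_succ (L : ℕ) : noVisit f Y (L + 1) = f ⁻¹' noVisit f Y L \ Y := by
  ext x
  simp only [noVisit, Set.mem_ofPred_eq, Set.mem_sdiff, Set.mem_preimage, Nat.forall_lt_succ_left,
    Function.iterate_zero_apply, Function.iterate_succ_apply]
  exact and_comm

/-- Points of `Y` that never return have `R = 0` (as `sInf ∅ = 0`); they fall into the second
set. -/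
theorem inter_preimage_noVisit_subset {R : X → ℕ}
    (hR : ∀ y, R y = sInf {n : ℕ | 1 ≤ n ∧ f^[n] y ∈ Y}) (L : ℕ) :
    Y ∩ f ⁻¹' noVisit f Y L ⊆ {y ∈ Y | L < R y} ∪ f ⁻¹' ⋂ M, noVisit f Y M := by
  rintro y ⟨hyY, hy⟩
  by_cases hret : ∃ n, 1 ≤ n ∧ f^[n] y ∈ Y
  · refine Or.inl ⟨hyY, not_le.1 fun hRL ↦ ?_⟩
    obtain ⟨hR1, hRY⟩ : 1 ≤ R y ∧ f^[R y] y ∈ Y := hR y ▸ Nat.sInf_mem hret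
    obtain ⟨j, hj⟩ := Nat.exists_eq_add_of_le' hR1
    rw [hj, Function.iterate_succ_apply] at hRY
    exact hy j (by omega) hRY
  · push Not at hret
    refine Or.inr (Set.mem_iInter.2 fun M j _ ↦ ?_)
    rw [← Function.iterate_succ_apply]
    exact hret (j + 1) (by omega)

theorem visitCount_eq_card [DecidablePred (· ∈ Y)] (n : ℕ) (x : X) :
    visitCount f Y n x = #{j ∈ range (n + 1) | f^[j] x ∈ Y} := by
  rw [visitCount, ← Set.ncard_coe_finset]
  congr 1
  ext j
  simp

theorem setOf_visitCount_le_subset {n k ℓ : ℕ} (hℓ : ℓ * (k + 1) ≤ n + 1) :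
    {x | visitCount f Y n x ≤ k} ⊆ ⋃ i ∈ range (k + 1), f^[ℓ * i] ⁻¹' noVisit f Y ℓ := by
  classical
  intro x hx
  rw [Set.mem_ofPred_eq, visitCount_eq_card] at hx
  obtain ⟨i, hik, hi⟩ := exists_le_forall_mul_add_notMem _ hx ℓ
  refine Set.mem_biUnion (mem_range.2 (Nat.lt_succ_of_le hik)) fun j hj hjY ↦ hi j hj ?_
  have : ℓ * i + j < n + 1 := calc
    ℓ * i + j < ℓ * (i + 1) := by rw [mul_add_one]; omega
    _ ≤ n + 1 := (Nat.mul_le_mul_left ℓ (by omega)).trans hℓ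
  rw [← Function.iterate_add_apply, add_comm] at hjY
  exact mem_filter.2 ⟨mem_range.2 this, hjY⟩

variable [MeasurableSpace X] {μ : Measure X}

theorem measurableSet_noVisit (hf : Measurable f) (hY : MeasurableSet Y) (L : ℕ) :
    MeasurableSet (noVisit f Y L) := by
  simp only [noVisit, Set.ofPred_forall]
  exact .iInter fun j ↦ .iInter fun _ ↦ hY.compl.preimage (hf.iterate j)

theorem Ergodic.measure_iInter_noVisit [IsFiniteMeasure μ] (hf : Ergodic f μ)
    (hY : MeasurableSet Y) (hμY : μ Y ≠ 0) : μ (⋂ L, noVisit f Y L) = 0 := by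
  set A := ⋂ L, noVisit f Y L
  have hA : MeasurableSet A := .iInter (measurableSet_noVisit hf.measurable hY)
  have hAY : Y ⊆ Aᶜ := fun y hy hyA ↦ Set.mem_iInter.1 hyA 1 0 one_pos hy
  have hAinv : A ⊆ f ⁻¹' A := fun x hx ↦ Set.mem_iInter.2 fun L ↦
    ((noVisit_succ L ▸ Set.mem_iInter.1 hx (L + 1)) : x ∈ f ⁻¹' noVisit f Y L \ Y).1
  rcases hf.ae_empty_or_univ_of_ae_le_preimage hA.nullMeasurableSet hAinv.eventuallyLE with
    hempty | huniv
  · exact ae_eq_empty.1 hempty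
  · exact absurd (measure_mono_null hAY (ae_eq_univ.1 huniv)) hμY

theorem measure_noVisit_le_add (hf : MeasurePreserving f μ μ) (hY : MeasurableSet Y)
    (hnull : μ (⋂ M, noVisit f Y M) = 0) {R : X → ℕ}
    (hR : ∀ y, R y = sInf {n : ℕ | 1 ≤ n ∧ f^[n] y ∈ Y}) (L : ℕ) :
    μ (noVisit f Y L) ≤ μ (noVisit f Y (L + 1)) + μ {y ∈ Y | L < R y} := by
  have hpre : μ (f ⁻¹' (⋂ M, noVisit f Y M)) = 0 := by
    rwa [hf.measure_preimage (MeasurableSet.iInter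
      (measurableSet_noVisit hf.measurable hY)).nullMeasurableSet]
  calc μ (noVisit f Y L) = μ (f ⁻¹' noVisit f Y L) :=
        (hf.measure_preimage (measurableSet_noVisit hf.measurable hY L).nullMeasurableSet).symm
    _ = μ (f ⁻¹' noVisit f Y L \ Y) + μ (Y ∩ f ⁻¹' noVisit f Y L) := by
        rw [Set.inter_comm, add_comm, measure_inter_add_sdiff _ hY]
    _ ≤ μ (noVisit f Y (L + 1)) + (μ {y ∈ Y | L < R y} + μ (f ⁻¹' ⋂ M, noVisit f Y M)) := by
        rw [noVisit_succ]
        gcongr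
        exact (measure_mono (inter_preimage_noVisit_subset hR L)).trans (measure_union_le _ _)
    _ = μ (noVisit f Y (L + 1)) + μ {y ∈ Y | L < R y} := by rw [hpre, add_zero]

theorem measure_noVisit_le_tsum [IsFiniteMeasure μ] (hf : Ergodic f μ) (hY : MeasurableSet Y)
    (hμY : μ Y ≠ 0) {R : X → ℕ} (hR : ∀ y, R y = sInf {n : ℕ | 1 ≤ n ∧ f^[n] y ∈ Y}) (L : ℕ) :
    μ (noVisit f Y L) ≤ ∑' i, μ {y ∈ Y | L + i < R y} := by
  have hnull := hf.measure_iInter_noVisit hY hμY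
  have hlim : Tendsto (fun M ↦ μ (noVisit f Y M)) atTop (𝓝 0) := hnull ▸
    tendsto_measure_iInter_atTop
      (fun M ↦ (measurableSet_noVisit hf.measurable hY M).nullMeasurableSet) noVisit_antitone
      ⟨0, measure_ne_top _ _⟩
  refine ENNReal.le_tsum_of_le_add_of_tendsto_zero (a := fun i ↦ μ (noVisit f Y (L + i)))
    (fun i ↦ measure_noVisit_le_add hf.toMeasurePreserving hY hnull hR (L + i)) ?_
  simpa only [Function.comp_def, add_comm _ L] using hlim.comp (tendsto_add_atTop_nat L)

theorem measure_noVisit_le [IsFiniteMeasure μ] (hf : Ergodic f μ) (hY : MeasurableSet Y)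
    (hμY : μ Y ≠ 0) {R : X → ℕ} (hR : ∀ y, R y = sInf {n : ℕ | 1 ≤ n ∧ f^[n] y ∈ Y})
    {c β : ℝ} (hc : 0 ≤ c) (hβ : 0 < β)
    (htail : ∀ n : ℕ, 1 ≤ n → μ {y ∈ Y | n < R y} ≤ ENNReal.ofReal (c * (n : ℝ) ^ (-(β + 1))))
    {L : ℕ} (hL : 1 ≤ L) :
    μ (noVisit f Y L) ≤ ENNReal.ofReal (c * (1 + β⁻¹) * (L : ℝ) ^ (-β)) := by
  calc μ (noVisit f Y L) ≤ ∑' i, μ {y ∈ Y | L + i < R y} := measure_noVisit_le_tsum hf hY hμY hR L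
    _ ≤ ∑' i, ENNReal.ofReal c * ENNReal.ofReal (((L + i : ℕ) : ℝ) ^ (-(β + 1))) := by
        gcongr with i
        rw [← ENNReal.ofReal_mul hc]
        exact htail (L + i) (by omega)
    _ ≤ ENNReal.ofReal c * ENNReal.ofReal ((1 + β⁻¹) * (L : ℝ) ^ (-β)) := by
        rw [ENNReal.tsum_mul_left]
        gcongr
        exact tsum_ofReal_rpow_neg_le hβ hL
    _ = ENNReal.ofReal (c * (1 + β⁻¹) * (L : ℝ) ^ (-β)) := by
        rw [← ENNReal.ofReal_mul hc, mul_assoc]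

theorem measurable_visitCount (hf : Measurable f) (hY : MeasurableSet Y) (n : ℕ) :
    Measurable (visitCount f Y n) := by
  classical
  have : visitCount f Y n = fun x ↦ ∑ j ∈ range (n + 1), if f^[j] x ∈ Y then 1 else 0 :=
    funext fun x ↦ by rw [visitCount_eq_card, card_filter]
  rw [this]
  exact Finset.measurable_sum _ fun j _ ↦
    Measurable.ite (hY.preimage (hf.iterate j)) measurable_const measurable_const

theorem measure_visitCount_le_le_mul (hf : MeasurePreserving f μ μ) (hY : MeasurableSet Y)
    {n k ℓ : ℕ} (hℓ : ℓ * (k + 1) ≤ n + 1) :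
    μ {x | visitCount f Y n x ≤ k} ≤ (k + 1) * μ (noVisit f Y ℓ) := by
  calc μ {x | visitCount f Y n x ≤ k}
      ≤ ∑ i ∈ range (k + 1), μ (f^[ℓ * i] ⁻¹' noVisit f Y ℓ) :=
        (measure_mono (setOf_visitCount_le_subset hℓ)).trans (measure_biUnion_finset_le _ _)
    _ = (k + 1) * μ (noVisit f Y ℓ) := by
        simp_rw [(hf.iterate _).measure_preimage
          (measurableSet_noVisit hf.measurable hY ℓ).nullMeasurableSet]
        rw [sum_const, card_range, nsmul_eq_mul, Nat.cast_add_one]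

theorem measure_visitCount_le [IsProbabilityMeasure μ] (hf : MeasurePreserving f μ μ)
    (hY : MeasurableSet Y) {K β : ℝ} (hK : 1 ≤ K) (hβ : 0 ≤ β)
    (hnoVisit : ∀ L : ℕ, 1 ≤ L → μ (noVisit f Y L) ≤ ENNReal.ofReal (K * (L : ℝ) ^ (-β)))
    {n : ℕ} (hn : 1 ≤ n) (k : ℕ) :
    μ {x | visitCount f Y n x ≤ k} ≤
      ENNReal.ofReal (2 ^ β * K * (n : ℝ) ^ (-β) * ((k : ℝ) + 1) ^ (β + 1)) := by
  have hn' : (0 : ℝ) < n := by exact_mod_cast hn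
  have hk : (0 : ℝ) < (k : ℝ) + 1 := by positivity
  rcases le_or_gt n k with hnk | hkn
  · refine prob_le_one.trans (ENNReal.one_le_ofReal.2 ?_)
    have hnk' : (n : ℝ) ≤ (k : ℝ) + 1 := by norm_cast; omega
    have hKn : 1 ≤ 2 ^ β * K := one_le_mul_of_one_le_of_one_le (Real.one_le_rpow one_le_two hβ) hK
    calc (1 : ℝ) ≤ 2 ^ β * K * ((n : ℝ) ^ (-β) * (n : ℝ) ^ (β + 1)) := by
          rw [← Real.rpow_add hn', neg_add_cancel_left, Real.rpow_one]
          nlinarith [show (1 : ℝ) ≤ n by exact_mod_cast hn]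
      _ ≤ 2 ^ β * K * (n : ℝ) ^ (-β) * ((k : ℝ) + 1) ^ (β + 1) := by
          rw [← mul_assoc]
          gcongr
  · set ℓ := (n + 1) / (k + 1)
    have hℓ : ℓ * (k + 1) ≤ n + 1 := Nat.div_mul_le_self _ _
    have hℓ1 : 1 ≤ ℓ := (Nat.le_div_iff_mul_le (by omega)).2 (by omega)
    have hnℓ : (n : ℝ) ≤ 2 * ((k : ℝ) + 1) * ℓ := by
      have h1 : n + 1 < (k + 1) * (ℓ + 1) := Nat.lt_mul_div_succ _ (Nat.succ_pos k)
      have h2 : k + 1 ≤ (k + 1) * ℓ := Nat.le_mul_of_pos_right _ hℓ1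
      have : n ≤ 2 * (k + 1) * ℓ := by nlinarith
      exact_mod_cast this
    calc μ {x | visitCount f Y n x ≤ k} ≤ (k + 1) * μ (noVisit f Y ℓ) :=
          measure_visitCount_le_le_mul hf hY hℓ
      _ ≤ ENNReal.ofReal ((k + 1) * (K * (ℓ : ℝ) ^ (-β))) := by
          rw [ENNReal.ofReal_mul hk.le, ENNReal.ofReal_add (by positivity) zero_le_one,
            ENNReal.ofReal_natCast, ENNReal.ofReal_one]
          gcongr
          exact hnoVisit ℓ hℓ1
      _ ≤ ENNReal.ofReal ((k + 1) * (K * ((2 * ((k : ℝ) + 1)) ^ β * (n : ℝ) ^ (-β)))) := by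
          gcongr
          exact rpow_neg_le_mul_rpow_neg hβ hn' (by positivity) hnℓ
      _ = ENNReal.ofReal (2 ^ β * K * (n : ℝ) ^ (-β) * ((k : ℝ) + 1) ^ (β + 1)) := by
          rw [Real.mul_rpow zero_le_two hk.le, Real.rpow_add hk, Real.rpow_one]
          ring_nf

end Visits

theorem integrated_diameter_bound_general
    {X : Type*} [mX : MeasurableSpace X]
    (μ : Measure X) [IsProbabilityMeasure μ]
    (T : X ≃ᵐ X) (hT : MeasurePreserving (⇑T) μ μ) (hTerg : Ergodic (⇑T) μ)
    (Ws : X → Set X)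
    (Y : Set X) (hYmeas : MeasurableSet Y) (hYpos : 0 < μ Y)
    (R : X → ℕ) (hR : ∀ y, R y = sInf {n : ℕ | 1 ≤ n ∧ (⇑T)^[n] y ∈ Y})
    (h : ℕ → X → ℕ) (hh : ∀ n x, h n x = {j : ℕ | j ≤ n ∧ (⇑T)^[j] x ∈ Y}.ncard)
    (φ : X → ℝ)
    (β : ℝ) (hβ : 1 < β)
    (C₁ : ℝ) (htail : ∀ n : ℕ, 1 ≤ n →
      μ {y ∈ Y | n < R y} ≤ ENNReal.ofReal (C₁ * (n : ℝ) ^ (-(β + 1))))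
    (C γ : ℝ) (hC : 1 ≤ C) (hγ0 : 0 < γ) (hγ1 : γ < 1)
    (hdiam : ∀ (x : X) (n : ℕ), 1 ≤ n →
      EMetric.diam (φ '' ((⇑T)^[n] '' Ws x)) ≤ ENNReal.ofReal (C * γ ^ h n x)) :
    ∃ C' : ℝ, 0 < C' ∧ ∀ n : ℕ, 1 ≤ n →
      ∫⁻ x, EMetric.diam (φ '' ((⇑T)^[n] '' Ws x)) ∂μ ≤
        ENNReal.ofReal (C' * (n : ℝ) ^ (-β)) := by
  obtain rfl : h = visitCount T Y := funext₂ hh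
  have hβ0 : 0 < β := one_pos.trans hβ
  set c := max C₁ 1
  have htail' : ∀ n : ℕ, 1 ≤ n →
      μ {y ∈ Y | n < R y} ≤ ENNReal.ofReal (c * (n : ℝ) ^ (-(β + 1))) := fun n hn ↦
    (htail n hn).trans (ENNReal.ofReal_le_ofReal (by gcongr; exact le_max_left _ _))
  set K := c * (1 + β⁻¹)
  have hK : 1 ≤ K := one_le_mul_of_one_le_of_one_le (le_max_right _ _)
    (le_add_of_nonneg_right (inv_nonneg.2 hβ0.le))
  set S := ∑' k : ℕ, ((k : ℝ) + 1) ^ (β + 1) * γ ^ k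
  have hS : 0 < S := (summable_add_one_rpow_mul_pow hγ0 hγ1 _).tsum_pos
    (fun k ↦ by positivity) 0 (by simp)
  refine ⟨C * (2 ^ β * K * S), by positivity, fun n hn ↦ ?_⟩
  have hdist := measure_visitCount_le hT hYmeas hK hβ0.le
    (fun L hL ↦ measure_noVisit_le hTerg hYmeas hYpos.ne' hR (by positivity) hβ0 htail' hL) hn
  calc _ ≤ ∫⁻ x, ENNReal.ofReal C * ENNReal.ofReal (γ ^ visitCount T Y n x) ∂μ :=
        lintegral_mono fun x ↦ (hdiam x n hn).trans_eq (ENNReal.ofReal_mul (by positivity))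
    _ = ENNReal.ofReal C * ∫⁻ x, ENNReal.ofReal (γ ^ visitCount T Y n x) ∂μ :=
        lintegral_const_mul' _ _ ENNReal.ofReal_ne_top
    _ ≤ ENNReal.ofReal C * ENNReal.ofReal (2 ^ β * K * (n : ℝ) ^ (-β) * S) := by
        gcongr
        exact lintegral_ofReal_pow_le (measurable_visitCount T.measurable hYmeas n) hγ0 hγ1
          (by positivity) hdist
    _ = ENNReal.ofReal (C * (2 ^ β * K * S) * (n : ℝ) ^ (-β)) := by
        rw [← ENNReal.ofReal_mul (by positivity)]
        ring_nf

/-- Lemma 3.2: suppose `Y` is a positive measure union of stable leaves,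
the first return time `R` to `Y` has tails `μ(R > n) = O(n^{-(β+1)})`, and the diameters of
`φ(T^n W)` contract geometrically in the number `h_n` of visits to `Y`.  Then the integrated
diameters satisfy `∫ diam(φ(T^n W^s(x))) dμ(x) = O(n^{-β})`. -/
theorem integrated_diameter_bound
    {X : Type*} [mX : MeasurableSpace X]
    (μ : Measure X) [IsProbabilityMeasure μ]
    (T : X ≃ᵐ X) (hT : MeasurePreserving (⇑T) μ μ) (hTerg : Ergodic (⇑T) μ)
    (Ws : X → Set X)
    (hmem : ∀ x, x ∈ Ws x)
    (hdisj : ∀ x y, Ws x = Ws y ∨ Disjoint (Ws x) (Ws y))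
    (hWmeas : ∀ x, MeasurableSet (Ws x))
    (hWinv : ∀ x, ⇑T '' Ws x ⊆ Ws (T x))
    (Y : Set X) (hYmeas : MeasurableSet Y) (hYpos : 0 < μ Y)
    (hYleaves : ∀ x ∈ Y, Ws x ⊆ Y)
    (R : X → ℕ) (hR : ∀ y, R y = sInf {n : ℕ | 1 ≤ n ∧ (⇑T)^[n] y ∈ Y})
    (h : ℕ → X → ℕ) (hh : ∀ n x, h n x = {j : ℕ | j ≤ n ∧ (⇑T)^[j] x ∈ Y}.ncard)
    (φ : X → ℝ) (hφmeas : Measurable φ)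
    (β : ℝ) (hβ : 1 < β)
    (C₁ : ℝ) (htail : ∀ n : ℕ, 1 ≤ n →
      μ {y ∈ Y | n < R y} ≤ ENNReal.ofReal (C₁ * (n : ℝ) ^ (-(β + 1))))
    (C γ : ℝ) (hC : 1 ≤ C) (hγ0 : 0 < γ) (hγ1 : γ < 1)
    (hdiam : ∀ (x : X) (n : ℕ), 1 ≤ n →
      EMetric.diam (φ '' ((⇑T)^[n] '' Ws x)) ≤ ENNReal.ofReal (C * γ ^ h n x)) :
    ∃ C' : ℝ, 0 < C' ∧ ∀ n : ℕ, 1 ≤ n →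
      ∫⁻ x, EMetric.diam (φ '' ((⇑T)^[n] '' Ws x)) ∂μ ≤
        ENNReal.ofReal (C' * (n : ℝ) ^ (-β)) :=
  integrated_diameter_bound_general (mX := mX) μ T hT hTerg Ws Y hYmeas hYpos R hR h hh φ β hβ C₁
    htail C γ hC hγ0 hγ1 hdiam
end

section
/- Let X be a set, T: X → X any map, and f, g: X → ℝ. For n ≥ 0 define f_n = Σ_{i=0}^{n−1} f∘T^i, g_n = Σ_{i=0}^{n−1} g∘T^i, and I_n = Σ_{0≤i<j<n} (f∘T^i)(g∘T^j). Then for all integers 0 ≤ k ≤ n, I_k = I_n − I_{n−k}∘T^k − (f_n − f_{n−k}∘T^k)(g_{n−k}∘T^k). -/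
open Finset

/-- Birkhoff sum `f_n = Σ_{i=0}^{n-1} f∘T^i`. -/
def birkS {X : Type*} (T : X → X) (f : X → ℝ) (n : ℕ) (x : X) : ℝ :=
  ∑ i ∈ Finset.range n, f (T^[i] x)

/-- Off-diagonal iterated Birkhoff sum `I_n = Σ_{0≤i<j<n} (f∘T^i)(g∘T^j)`. -/
def iterS {X : Type*} (T : X → X) (f g : X → ℝ) (n : ℕ) (x : X) : ℝ :=
  ∑ j ∈ Finset.range n, ∑ i ∈ Finset.range j, f (T^[i] x) * g (T^[j] x)

lemma birkS_add {X : Type*} (T : X → X) (f : X → ℝ) (k m : ℕ) (x : X) :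
    birkS T f (k + m) x = birkS T f k x + birkS T f m (T^[k] x) := by
  have h1 : ∀ i : ℕ, T^[k + i] x = T^[i] (T^[k] x) := fun i => by
    rw [Nat.add_comm, Function.iterate_add_apply]
  simp only [birkS, Finset.sum_range_add, h1]

lemma iterS_add {X : Type*} (T : X → X) (f g : X → ℝ) (k m : ℕ) (x : X) :
    iterS T f g (k + m) x =
      iterS T f g k x + iterS T f g m (T^[k] x) +
        birkS T f k x * birkS T g m (T^[k] x) := by
  have h1 : ∀ i : ℕ, T^[k + i] x = T^[i] (T^[k] x) := fun i => by
    rw [Nat.add_comm, Function.iterate_add_apply]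
  simp only [iterS, birkS, Finset.sum_range_add, h1, Finset.sum_add_distrib,
    Finset.mul_sum, Finset.sum_mul]
  ring

/-- algebraic identity in the proof of Proposition 2.7: for `0 ≤ k ≤ n`,
`I_k = I_n − I_{n−k}∘T^k − (f_n − f_{n−k}∘T^k)(g_{n−k}∘T^k)`. -/
theorem iterated_sum_identity
    {X : Type*} (T : X → X) (f g : X → ℝ) (n k : ℕ) (hkn : k ≤ n) (x : X) :
    iterS T f g k x =
      iterS T f g n x - iterS T f g (n - k) (T^[k] x) -
        (birkS T f n x - birkS T f (n - k) (T^[k] x)) * birkS T g (n - k) (T^[k] x) := by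
  obtain ⟨m, rfl⟩ := Nat.exists_eq_add_of_le hkn
  rw [Nat.add_sub_cancel_left, iterS_add, birkS_add]
  ring
end
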